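/- Let a > 0 and θ ∈ ℝ, and let (u_n)_{n∈ℕ} ⊂ (0,1] and (φ_n)_{n∈ℕ} ⊂ ℝ be sequences with n·u_n → a and n·φ_n → θ as n → ∞. Then g(u_n, φ_n)/n → 2a/(a² + θ²) as n → ∞. -/

import Mathlib

open Filter

/-- `g(u,φ) = u(2-u)/(u² + 2(1-u)(1-cos φ))`. -/
noncomputable def gfun (u φ : ℝ) : ℝ :=
  u * (2 - u) / (u ^ 2 + 2 * (1 - u) * (1 - Real.cos φ))

/-!
Multiplying numerator and denominator of `g(u, φ) / r` by `r`, one gets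
`(r u)(2 - u) / ((r u)² + 2 (1 - u) · r² (1 - cos φ))`. Since `u, φ → 0`, the factor `2 - u` tends
to `2`, `1 - u` tends to `1`, and `r² (1 - cos φ) = (r φ)² / 2 · sinc (φ / 2)² → θ² / 2`.
-/

open Real Topology

lemma Real.mul_sinc (x : ℝ) : x * sinc x = sin x := by
  rcases eq_or_ne x 0 with rfl | hx
  · simp
  · rw [sinc_of_ne_zero hx, mul_div_cancel₀ _ hx]

lemma Real.one_sub_cos_eq_sq_mul_sinc_sq (x : ℝ) : 1 - cos x = x ^ 2 / 2 * sinc (x / 2) ^ 2 := by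
  have hsin : sin (x / 2) = x / 2 * sinc (x / 2) := (mul_sinc _).symm
  calc 1 - cos x = 2 * sin (x / 2) ^ 2 := by
        rw [sin_sq_eq_half_sub, mul_div_cancel₀ x two_ne_zero]; ring
    _ = x ^ 2 / 2 * sinc (x / 2) ^ 2 := by rw [hsin]; ring

variable {α : Type*} {l : Filter α}

lemma Filter.Tendsto.sq_mul_one_sub_cos {r x : α → ℝ} {c : ℝ}
    (hrx : Tendsto (fun i => r i * x i) l (𝓝 c)) (hx : Tendsto x l (𝓝 0)) :
    Tendsto (fun i => r i ^ 2 * (1 - cos (x i))) l (𝓝 (c ^ 2 / 2)) := by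
  have hsinc : Tendsto (fun i => sinc (x i / 2)) l (𝓝 1) := by
    have hx2 : Tendsto (fun i => x i / 2) l (𝓝 0) := by simpa using hx.div_const 2
    exact sinc_zero ▸ (continuous_sinc.tendsto 0).comp hx2
  have := ((hrx.pow 2).div_const 2).mul (hsinc.pow 2)
  rw [one_pow, mul_one] at this
  refine this.congr fun i => ?_
  rw [one_sub_cos_eq_sq_mul_sinc_sq]
  ring

lemma Filter.Tendsto.tendsto_zero_of_mul_atTop {r x : α → ℝ} {c : ℝ}
    (hrx : Tendsto (fun i => r i * x i) l (𝓝 c)) (hr : Tendsto r l atTop) :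
    Tendsto x l (𝓝 0) := by
  refine (hrx.div_atTop hr).congr' ?_
  filter_upwards [hr.eventually_gt_atTop 0] with i hi
  exact mul_div_cancel_left₀ _ hi.ne'

lemma gfun_div_eq (u φ : ℝ) {r : ℝ} (hr : r ≠ 0) :
    gfun u φ / r = r * u * (2 - u) / ((r * u) ^ 2 + 2 * (1 - u) * (r ^ 2 * (1 - cos φ))) := by
  rw [gfun, div_div, ← mul_div_mul_left _ _ hr]
  ring_nf

theorem tendsto_gfun_div {r u φ : α → ℝ} {a θ : ℝ} (ha : a ≠ 0) (hr : Tendsto r l atTop)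
    (hu : Tendsto (fun i => r i * u i) l (𝓝 a)) (hφ : Tendsto (fun i => r i * φ i) l (𝓝 θ)) :
    Tendsto (fun i => gfun (u i) (φ i) / r i) l (𝓝 (2 * a / (a ^ 2 + θ ^ 2))) := by
  have hu0 := hu.tendsto_zero_of_mul_atTop hr
  have hcos := hφ.sq_mul_one_sub_cos (hφ.tendsto_zero_of_mul_atTop hr)
  have hnum : Tendsto (fun i => r i * u i * (2 - u i)) l (𝓝 (a * (2 - 0))) :=
    hu.mul (tendsto_const_nhds.sub hu0)
  have hden : Tendsto (fun i => (r i * u i) ^ 2 + 2 * (1 - u i) * (r i ^ 2 * (1 - cos (φ i)))) l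
      (𝓝 (a ^ 2 + 2 * (1 - 0) * (θ ^ 2 / 2))) :=
    (hu.pow 2).add ((tendsto_const_nhds.sub hu0).const_mul 2 |>.mul hcos)
  have hlim := hnum.div hden (by positivity)
  rw [show a * (2 - 0) = 2 * a by ring, show 2 * (1 - 0) * (θ ^ 2 / 2) = θ ^ 2 by ring] at hlim
  refine hlim.congr' ?_
  filter_upwards [hr.eventually_gt_atTop 0] with i hi
  exact (gfun_div_eq _ _ hi.ne').symm

theorem stmt_16_general (a θ : ℝ) (ha : 0 < a) (u φ : ℕ → ℝ)
    (hua : Tendsto (fun n : ℕ => (n : ℝ) * u n) atTop (nhds a))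
    (hφ : Tendsto (fun n : ℕ => (n : ℝ) * φ n) atTop (nhds θ)) :
    Tendsto (fun n : ℕ => gfun (u n) (φ n) / n) atTop (nhds (2 * a / (a ^ 2 + θ ^ 2))) :=
  tendsto_gfun_div ha.ne' tendsto_natCast_atTop_atTop hua hφ

/-- if `a > 0`, `u_n ∈ (0,1]`, `n u_n → a` and `n φ_n → θ`, then
`g(u_n, φ_n)/n → 2a/(a² + θ²)`. -/
theorem stmt_16 (a θ : ℝ) (ha : 0 < a) (u φ : ℕ → ℝ)
    (hu : ∀ n, u n ∈ Set.Ioc (0:ℝ) 1)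
    (hua : Tendsto (fun n : ℕ => (n : ℝ) * u n) atTop (nhds a))
    (hφ : Tendsto (fun n : ℕ => (n : ℝ) * φ n) atTop (nhds θ)) :
    Tendsto (fun n : ℕ => gfun (u n) (φ n) / n) atTop (nhds (2 * a / (a ^ 2 + θ ^ 2))) :=
  stmt_16_general a θ ha u φ hua hφ
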